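/- Let (Ω, F, P, θ) be a stationary ergodic quadruple carrying σ, τ as in the context and let p ≥ 1. Let U be any measurable, almost surely finite Ō_p-valued random vector with U∘θ = H^p(U) P-a.s., and let Y be any measurable, almost surely finite Ō_p-valued random vector with Y∘θ = Ψ^p(Y) P-a.s. Then U(i) ≤ Y(i) almost surely for every i ∈ {1,…,p}. -/

import Mathlib

open MeasureTheory ProbabilityTheory Filter

noncomputable section

/-- Positive part `[x]⁺ = max(x,0)`. -/
def pos (x : ℝ) : ℝ := max x 0

/-- Nondecreasing rearrangement of a finite real vector. -/
def sortVec {n : ℕ} (u : Fin n → ℝ) : Fin n → ℝ := u ∘ Tuple.sort u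

/-- `u` belongs to `Ō_n`: nonnegative and nondecreasing coordinates. -/
def OSorted {n : ℕ} (u : Fin n → ℝ) : Prop := (∀ i, 0 ≤ u i) ∧ Monotone u

/-- Two-sided iterates `θ^n`, `n ∈ ℤ`, of a measurable bijection. -/
def iterZ {Ω : Type*} [MeasurableSpace Ω] (θ : Ω ≃ᵐ Ω) : ℤ → Ω → Ω
  | Int.ofNat n => (⇑θ)^[n]
  | Int.negSucc n => (⇑θ.symm)^[n + 1]

/-- The term `σ∘θ^{-k} − Σ_{i=1}^k τ∘θ^{-i}` (here `θinv = θ⁻¹`). -/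
def Zterm {Ω : Type*} (θinv : Ω → Ω) (σ τ : Ω → ℝ) (k : ℕ) (ω : Ω) : ℝ :=
  σ (θinv^[k] ω) - ∑ i ∈ Finset.Icc 1 k, τ (θinv^[i] ω)

/-- `Z_ℓ = [sup_{k ≥ ℓ} (σ∘θ^{-k} − Σ_{i=1}^k τ∘θ^{-i})]⁺`. -/
def Zfam {Ω : Type*} (θinv : Ω → Ω) (σ τ : Ω → ℝ) (ℓ : ℕ) (ω : Ω) : ℝ :=
  pos (⨆ k : {k : ℕ // ℓ ≤ k}, Zterm θinv σ τ (k : ℕ) ω)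

/-- GI/GI input: the doubly infinite sequences `(σ∘θ^n)` and `(τ∘θ^n)` are
jointly independent, and each is identically distributed. -/
def GIGI {Ω : Type*} [MeasurableSpace Ω] (μ : Measure Ω) (θ : Ω ≃ᵐ Ω) (σ τ : Ω → ℝ) : Prop :=
  iIndepFun
    (fun x : ℤ × Bool => fun ω => if x.2 then σ (iterZ θ x.1 ω) else τ (iterZ θ x.1 ω)) μ
  ∧ (∀ n : ℤ, IdentDistrib (fun ω => σ (iterZ θ n ω)) σ μ μ)
  ∧ (∀ n : ℤ, IdentDistrib (fun ω => τ (iterZ θ n ω)) τ μ μ)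

/-- The distribution of `τ` has unbounded support. -/
def UnboundedSupport {Ω : Type*} [MeasurableSpace Ω] (μ : Measure Ω) (τ : Ω → ℝ) : Prop :=
  ∀ M : ℝ, 0 < M → 0 < μ {ω | M < τ ω}

/-- The Kiefer–Wolfowitz map `G(u) = sorted [u + σe₁ − τ𝟙]⁺`. -/
def Gmap (S : ℕ) (σ τ : ℝ) (u : Fin S → ℝ) : Fin S → ℝ :=
  sortVec fun i => pos (u i + (if (i : ℕ) = 0 then σ else 0) - τ)

/-- The map `G^p` driving the J_{p+1}SW service profile. -/
def Gp (S p : ℕ) (hS : 0 < S) (σ τ : ℝ) (u : Fin S → ℝ) : Fin S → ℝ :=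
  if u ⟨0, hS⟩ = 0 then Gmap S σ τ u
  else sortVec fun i => pos (u i + (if (i : ℕ) = p then σ else 0) - τ)

/-- The map `Γ^p`. -/
def Gamma (p : ℕ) (σ τ : ℝ) (u : Fin p → ℝ) : Fin p → ℝ := fun j =>
  if h : (j : ℕ) + 1 < p then pos (u ⟨(j : ℕ) + 1, h⟩ - τ) else pos (max (u j) σ - τ)

/-- The map `Ψ^p`. -/
def Psi (p : ℕ) (σ τ : ℝ) (u : Fin p → ℝ) : Fin p → ℝ := fun j =>
  if h : (j : ℕ) + 1 < p then pos (min (max (u j) σ) (u ⟨(j : ℕ) + 1, h⟩) - τ)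
  else pos (max (u j) σ - τ)

/-- The map `Φ^p` on `Ō_S` (with `1 ≤ p < S`). -/
def Phi (S p : ℕ) (hp : p < S) (σ τ : ℝ) (u : Fin S → ℝ) : Fin S → ℝ := fun j =>
  let ind : ℝ := if 0 < u ⟨0, Nat.lt_of_le_of_lt (Nat.zero_le p) hp⟩ then u ⟨p, hp⟩ else 0
  if h : (j : ℕ) + 1 < S then
    if (j : ℕ) < p then pos (min (max (u j) σ) (u ⟨(j : ℕ) + 1, h⟩) - τ)
    else pos (min (max (u j) (σ + ind)) (u ⟨(j : ℕ) + 1, h⟩) - τ)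
  else pos (max (u j) (σ + ind) - τ)

/-- The loss-system map `H^p(u) = sorted [u + σ·1_{u(1)=0}e₁ − τ𝟙]⁺`. -/
def Hmap (p : ℕ) (hp : 0 < p) (σ τ : ℝ) (u : Fin p → ℝ) : Fin p → ℝ :=
  sortVec fun i => pos (u i + (if (i : ℕ) = 0 ∧ u ⟨0, hp⟩ = 0 then σ else 0) - τ)

end

/-!
Pathwise, `H^p(u) ≤ Ψ^p(u)` coordinatewise, and `Ψ^p` is nonexpansive: `u ≤ y + d` implies
`Ψ^p(u) ≤ Ψ^p(y) + d`. Hence the excess `D = max(0, maxᵢ (U(i) − Y(i)))` satisfies `D∘θ ≤ D`,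
so by ergodicity it is a.s. a constant `c`. If `c > 0`, equality in the nonexpansiveness bound
can only move an index attaining `c` down by one, or keep it in place while `Y` at that index
decreases by `τ`; so the largest index `m` attaining `c` satisfies `m∘θ ≤ m`, is a.s. constant as well, and then
`Y(m)∘θ = Y(m) − τ < Y(m)`, which is impossible for an ergodic measure-preserving `θ`.
-/

theorem pos_le_pos {a b : ℝ} (h : a ≤ b) : pos a ≤ pos b := max_le_max_right 0 h

theorem pos_le_pos_add {a b d : ℝ} (h : a ≤ b + d) (hd : 0 ≤ d) : pos a ≤ pos b + d := by
  unfold pos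
  exact max_le (by linarith [le_max_left b 0]) (by linarith [le_max_right b 0])

theorem sortVec_le_of_le_card {n : ℕ} {x : Fin n → ℝ} {b : ℝ} {j : Fin n} (S : Finset (Fin n))
    (hS : (j : ℕ) + 1 ≤ S.card) (hx : ∀ i ∈ S, x i ≤ b) : sortVec x j ≤ b := by
  classical
  set π := Tuple.sort x
  have hcard : (Finset.Iio j).card < (S.image π.symm).card := by
    rw [Fin.card_Iio, Finset.card_image_of_injective _ π.symm.injective]
    omega
  obtain ⟨l, hl, hjl⟩ := Finset.exists_mem_notMem_of_card_lt_card hcard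
  obtain ⟨i, hi, rfl⟩ := Finset.mem_image.1 hl
  calc sortVec x j ≤ sortVec x (π.symm i) :=
        Tuple.monotone_sort x (not_lt.1 (by simpa using hjl))
    _ = x i := by simp [sortVec, π]
    _ ≤ b := hx i hi

section Psi

variable {p : ℕ} {σ τ : ℝ}

theorem le_Psi_of_le {b : ℝ} {u : Fin p → ℝ} {j : Fin p} (h₁ : b ≤ max (u j) σ)
    (h₂ : ∀ h : (j : ℕ) + 1 < p, b ≤ u ⟨j + 1, h⟩) : pos (b - τ) ≤ Psi p σ τ u j := by
  unfold Psi
  split_ifs with h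
  · exact pos_le_pos (by linarith [le_min h₁ (h₂ h)])
  · exact pos_le_pos (by linarith)

theorem Psi_le_Psi_add {d : ℝ} (hd : 0 ≤ d) {u y : Fin p → ℝ} (h : ∀ i, u i ≤ y i + d)
    (j : Fin p) : Psi p σ τ u j ≤ Psi p σ τ y j + d := by
  have hmax : max (u j) σ ≤ max (y j) σ + d :=
    max_le (by linarith [h j, le_max_left (y j) σ]) (by linarith [le_max_right (y j) σ])
  unfold Psi
  split_ifs with hj
  · refine pos_le_pos_add ?_ hd
    linarith [min_le_min hmax (h ⟨j + 1, hj⟩), min_add_add_right (max (y j) σ) (y ⟨j + 1, hj⟩) d]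
  · exact pos_le_pos_add (by linarith) hd

theorem Psi_eq_Psi_add_cases {c : ℝ} (hc : 0 < c) {u y : Fin p → ℝ} (h : ∀ i, u i ≤ y i + c)
    {j : Fin p} (hE : Psi p σ τ u j = Psi p σ τ y j + c) :
    (∃ h : (j : ℕ) + 1 < p, u ⟨j + 1, h⟩ = y ⟨j + 1, h⟩ + c) ∨
      (u j = y j + c ∧ Psi p σ τ y j = y j - τ) := by
  have hj := h j
  unfold Psi pos at *
  split_ifs at hE ⊢ with hj1
  · have hj1' := h ⟨j + 1, hj1⟩
    grind
  · grind

theorem sortVec_update_le_Psi [NeZero p] {a : ℝ} {u : Fin p → ℝ} (hu : Monotone u)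
    (ha : a ≤ max (u 0) σ) (j : Fin p) :
    sortVec (fun i => pos (Function.update u 0 a i - τ)) j ≤ Psi p σ τ u j := by
  have haj : a ≤ max (u j) σ := ha.trans (max_le_max_right σ (hu (Fin.zero_le j)))
  by_cases hk : ∃ h : (j : ℕ) + 1 < p, u ⟨j + 1, h⟩ ≤ a
  · obtain ⟨hj1, hle⟩ := hk
    refine sortVec_le_of_le_card (Finset.Ioc 0 ⟨j + 1, hj1⟩) (by simp [Fin.card_Ioc]) ?_
    intro i hi
    obtain ⟨hi0, hij⟩ := Finset.mem_Ioc.1 hi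
    rw [Function.update_of_ne hi0.ne']
    exact le_Psi_of_le ((hu hij).trans (hle.trans haj)) fun _ => hu hij
  · push Not at hk
    refine sortVec_le_of_le_card (Finset.Iic j) (by simp [Fin.card_Iic]) ?_
    intro i hi
    have hij := Finset.mem_Iic.1 hi
    rcases eq_or_ne i 0 with rfl | hi0
    · rw [Function.update_self]
      exact le_Psi_of_le haj fun h => (hk h).le
    · rw [Function.update_of_ne hi0]
      exact le_Psi_of_le ((hu hij).trans (le_max_left _ _))
        fun h => hu (hij.trans (Fin.le_iff_val_le_val.2 (Nat.le_succ _)))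

theorem Hmap_le_Psi (hp : 0 < p) {u : Fin p → ℝ} (hu : Monotone u) (j : Fin p) :
    Hmap p hp σ τ u j ≤ Psi p σ τ u j := by
  have : NeZero p := ⟨hp.ne'⟩
  have h0 : (⟨0, hp⟩ : Fin p) = 0 := Fin.ext (Fin.val_zero p).symm
  have hv : (fun i : Fin p => pos (u i + (if (i : ℕ) = 0 ∧ u ⟨0, hp⟩ = 0 then σ else 0) - τ)) =
      fun i => pos (Function.update u 0 (u 0 + if u 0 = 0 then σ else 0) i - τ) := by
    funext i
    rcases eq_or_ne i 0 with rfl | hi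
    · simp [h0]
    · simp [hi]
  unfold Hmap
  rw [hv]
  refine sortVec_update_le_Psi hu ?_ j
  by_cases h : u 0 = 0 <;> simp [h]

end Psi

section Gap

variable {p : ℕ} [NeZero p]

noncomputable def gap (u y : Fin p → ℝ) : ℝ :=
  max (Finset.univ.sup' Finset.univ_nonempty fun j => u j - y j) 0

/-- The largest index `j` with `u j - y j = c`, or `0` if there is none. -/
noncomputable def topIndex (c : ℝ) (u y : Fin p → ℝ) : Fin p :=
  Finset.univ.sup' Finset.univ_nonempty fun j => if u j - y j = c then j else 0

variable {u y : Fin p → ℝ}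

theorem gap_nonneg : 0 ≤ gap u y := le_max_right _ _

theorem sub_le_gap (j : Fin p) : u j - y j ≤ gap u y :=
  (Finset.le_sup' (fun j => u j - y j) (Finset.mem_univ j)).trans (le_max_left _ _)

theorem gap_le {d : ℝ} (hd : 0 ≤ d) (h : ∀ j, u j - y j ≤ d) : gap u y ≤ d :=
  max_le (Finset.sup'_le _ _ fun j _ => h j) hd

theorem exists_sub_eq_gap (h : 0 < gap u y) : ∃ j, u j - y j = gap u y := by
  obtain ⟨j, -, hj⟩ := Finset.exists_mem_eq_sup' Finset.univ_nonempty fun j => u j - y j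
  refine ⟨j, ?_⟩
  unfold gap at h ⊢
  rw [← hj, max_eq_left (not_lt.1 fun hneg => h.ne' (max_eq_right hneg.le))]

theorem le_topIndex {c : ℝ} {j : Fin p} (hj : u j - y j = c) : j ≤ topIndex c u y := by
  calc j = if u j - y j = c then j else 0 := (if_pos hj).symm
    _ ≤ topIndex c u y :=
      Finset.le_sup' (fun j => if u j - y j = c then j else 0) (Finset.mem_univ j)

theorem sub_topIndex_eq {c : ℝ} (h : ∃ j, u j - y j = c) :
    u (topIndex c u y) - y (topIndex c u y) = c := by
  obtain ⟨j, hj⟩ := h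
  obtain ⟨i, -, hi⟩ :=
    Finset.exists_mem_eq_sup' Finset.univ_nonempty fun j => if u j - y j = c then j else 0
  change topIndex c u y = _ at hi
  split_ifs at hi with hic
  · rwa [hi]
  · have hj0 : j = 0 := nonpos_iff_eq_zero.1 (hi ▸ le_topIndex hj)
    rwa [hi, ← hj0]

theorem Measurable.gap {Ω : Type*} [MeasurableSpace Ω] {U Y : Ω → Fin p → ℝ}
    (hU : Measurable U) (hY : Measurable Y) : Measurable fun ω => gap (U ω) (Y ω) := by
  unfold _root_.gap
  fun_prop

theorem Measurable.topIndex {Ω : Type*} [MeasurableSpace Ω] {U Y : Ω → Fin p → ℝ}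
    (hU : Measurable U) (hY : Measurable Y) (c : ℝ) :
    Measurable fun ω => topIndex c (U ω) (Y ω) := by
  have hsup := Finset.measurable_sup' Finset.univ_nonempty
    (f := fun j ω => if U ω j - Y ω j = c then j else 0) fun j _ =>
      Measurable.ite ((((measurable_pi_apply j).comp hU).sub ((measurable_pi_apply j).comp hY))
        (measurableSet_singleton c)) measurable_const measurable_const
  convert hsup using 1
  funext ω
  simp [_root_.topIndex, Finset.sup'_apply]

end Gap

theorem Ergodic.ae_eq_const_of_ae_comp_le {α X : Type*} [MeasurableSpace α] {μ : Measure α}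
    [IsFiniteMeasure μ] [LinearOrder X] [TopologicalSpace X] [OrderTopology X]
    [SecondCountableTopology X] [MeasurableSpace X] [OpensMeasurableSpace X] [Nonempty X]
    {f : α → α} {g : α → X} (hf : Ergodic f μ) (hg : NullMeasurable g μ)
    (hle : ∀ᵐ x ∂μ, g (f x) ≤ g x) : ∃ c, ∀ᵐ x ∂μ, g x = c := by
  refine exists_eventuallyEq_const_of_forall_separating
    (fun s => s ∈ Set.range (Set.Iic : X → Set X)) ?_
  rintro _ ⟨q, rfl⟩
  have hsub : g ⁻¹' Set.Iic q ≤ᵐ[μ] f ⁻¹' (g ⁻¹' Set.Iic q) :=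
    hle.mono fun x hx hq => le_trans hx hq
  rcases hf.ae_empty_or_univ_of_ae_le_preimage (hg measurableSet_Iic) hsub with h | h
  · exact .inr (h.mem_iff.mono fun _ hx hmem => hx.1 hmem)
  · exact .inl (h.mem_iff.mono fun _ hx => hx.2 trivial)

theorem Ergodic.not_ae_comp_lt {α : Type*} [MeasurableSpace α] {μ : Measure α}
    [IsFiniteMeasure μ] [NeZero μ] {f : α → α} {g : α → ℝ} (hf : Ergodic f μ)
    (hg : NullMeasurable g μ) : ¬ ∀ᵐ x ∂μ, g (f x) < g x := by
  intro hlt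
  obtain ⟨c, hc⟩ := hf.ae_eq_const_of_ae_comp_le hg (hlt.mono fun _ => le_of_lt)
  obtain ⟨x, hx, hgx, hgfx⟩ := (hlt.and (hc.and (hf.quasiMeasurePreserving.ae hc))).exists
  exact hx.ne (hgfx.trans hgx.symm)

section Comparison

variable {p : ℕ} [NeZero p] {σ τ c : ℝ} {u y u' : Fin p → ℝ}

theorem gap_Psi_le (hu' : ∀ j, u' j ≤ Psi p σ τ u j) : gap u' (Psi p σ τ y) ≤ gap u y := by
  have hle : ∀ i, u i ≤ y i + gap u y := fun i => by linarith [sub_le_gap (u := u) (y := y) i]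
  exact gap_le gap_nonneg fun j => by
    linarith [hu' j, Psi_le_Psi_add (σ := σ) (τ := τ) gap_nonneg hle j]

theorem gap_attained_cases (hc : 0 < c) (hgap : gap u y = c) (hu' : ∀ j, u' j ≤ Psi p σ τ u j)
    {j : Fin p} (hj : u' j - Psi p σ τ y j = c) :
    (∃ h : (j : ℕ) + 1 < p, u ⟨j + 1, h⟩ - y ⟨j + 1, h⟩ = c) ∨
      (u j - y j = c ∧ Psi p σ τ y j = y j - τ) := by
  have hle : ∀ i, u i ≤ y i + c := fun i => by linarith [sub_le_gap (u := u) (y := y) i]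
  have hE : Psi p σ τ u j = Psi p σ τ y j + c :=
    le_antisymm (Psi_le_Psi_add hc.le hle j) (by linarith [hu' j])
  rcases Psi_eq_Psi_add_cases hc hle hE with ⟨h, hj1⟩ | ⟨hj0, hPsi⟩
  · exact .inl ⟨h, by linarith⟩
  · exact .inr ⟨by linarith, hPsi⟩

theorem topIndex_Psi_le (hc : 0 < c) (hgap : gap u y = c) (hu' : ∀ j, u' j ≤ Psi p σ τ u j)
    (hgap' : gap u' (Psi p σ τ y) = c) :
    topIndex c u' (Psi p σ τ y) ≤ topIndex c u y := by
  have htop := sub_topIndex_eq (hgap' ▸ exists_sub_eq_gap (hgap'.symm ▸ hc))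
  rcases gap_attained_cases hc hgap hu' htop with ⟨_, hj1⟩ | ⟨hj0, -⟩
  · exact (Fin.le_iff_val_le_val.2 (Nat.le_succ _)).trans (le_topIndex hj1)
  · exact le_topIndex hj0

theorem Psi_topIndex_eq (hc : 0 < c) (hgap : gap u y = c) (hu' : ∀ j, u' j ≤ Psi p σ τ u j)
    (hgap' : gap u' (Psi p σ τ y) = c)
    (heq : topIndex c u' (Psi p σ τ y) = topIndex c u y) :
    Psi p σ τ y (topIndex c u y) = y (topIndex c u y) - τ := by
  have htop := sub_topIndex_eq (hgap' ▸ exists_sub_eq_gap (hgap'.symm ▸ hc))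
  rw [heq] at htop
  rcases gap_attained_cases hc hgap hu' htop with ⟨_, hj1⟩ | ⟨-, hPsi⟩
  · have := Fin.le_iff_val_le_val.1 (le_topIndex hj1)
    simp at this
  · exact hPsi

end Comparison

theorem ae_le_of_comp_le_Psi {Ω : Type*} [MeasurableSpace Ω] {μ : Measure Ω}
    [IsProbabilityMeasure μ] {θ : Ω → Ω} (hθ : Ergodic θ μ) {σ τ : Ω → ℝ}
    (hτ : ∀ᵐ ω ∂μ, 0 < τ ω) {p : ℕ} [NeZero p] {U Y : Ω → Fin p → ℝ}
    (hUm : Measurable U) (hYm : Measurable Y)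
    (hU : ∀ᵐ ω ∂μ, ∀ j, U (θ ω) j ≤ Psi p (σ ω) (τ ω) (U ω) j)
    (hY : ∀ᵐ ω ∂μ, Y (θ ω) = Psi p (σ ω) (τ ω) (Y ω)) :
    ∀ᵐ ω ∂μ, ∀ i, U ω i ≤ Y ω i := by
  obtain ⟨c, hc⟩ := hθ.ae_eq_const_of_ae_comp_le (hUm.gap hYm).nullMeasurable <| by
    filter_upwards [hU, hY] with ω hu hy
    rw [hy]
    exact gap_Psi_le hu
  have hcθ := hθ.quasiMeasurePreserving.ae hc
  obtain ⟨ω₀, hω₀⟩ := hc.exists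
  rcases (hω₀ ▸ gap_nonneg : 0 ≤ c).eq_or_lt with rfl | hcpos
  · filter_upwards [hc] with ω hω i
    linarith [sub_le_gap (u := U ω) (y := Y ω) i]
  obtain ⟨m, hm⟩ := hθ.ae_eq_const_of_ae_comp_le (hUm.topIndex hYm c).nullMeasurable <| by
    filter_upwards [hU, hY, hc, hcθ] with ω hu hy hω hθω
    rw [hy] at hθω ⊢
    exact topIndex_Psi_le hcpos hω hu hθω
  have hmθ := hθ.quasiMeasurePreserving.ae hm
  refine (hθ.not_ae_comp_lt (g := fun ω => Y ω m)
    ((measurable_pi_apply m).comp hYm).nullMeasurable ?_).elim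
  filter_upwards [hU, hY, hc, hcθ, hm, hmθ, hτ] with ω hu hy hω hθω hmω hmθω hτω
  rw [hy] at hθω hmθω ⊢
  have hPsi := Psi_topIndex_eq hcpos hω hu hθω (hmθω.trans hmω.symm)
  rw [hmω] at hPsi
  linarith

theorem stmt19 {Ω : Type*} [MeasurableSpace Ω] (μ : MeasureTheory.Measure Ω)
    [MeasureTheory.IsProbabilityMeasure μ]
    (θ : Ω ≃ᵐ Ω) (hergo : Ergodic (⇑θ) μ)
    (σ τ : Ω → ℝ) (hτ0 : ∀ᵐ ω ∂μ, 0 < τ ω)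
    (p : ℕ) (hp : 1 ≤ p)
    (U : Ω → Fin p → ℝ) (hUm : Measurable U) (hUs : ∀ᵐ ω ∂μ, OSorted (U ω))
    (hUr : ∀ᵐ ω ∂μ, U (θ ω) = Hmap p (by omega) (σ ω) (τ ω) (U ω))
    (Y : Ω → Fin p → ℝ) (hYm : Measurable Y)
    (hYr : ∀ᵐ ω ∂μ, Y (θ ω) = Psi p (σ ω) (τ ω) (Y ω)) :
    ∀ᵐ ω ∂μ, ∀ i : Fin p, U ω i ≤ Y ω i := by
  have : NeZero p := ⟨by omega⟩
  refine ae_le_of_comp_le_Psi hergo hτ0 hUm hYm ?_ hYr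
  filter_upwards [hUr, hUs] with ω hUω hUsω j
  rw [hUω]
  exact Hmap_le_Psi _ hUsω.2 j
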